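/- A minimizer of a strictly convex cost coupling between a nonatomic source and any target must be supported on a graph in the discrete case: if ν = Σ_i b_i δ_{y_i} with all b_i > 0 and γ is a coupling of μ and ν whose cost equals the dual bound attained by the Laguerre map (with a.e.-unique minimizers), then γ-almost every (x, y) satisfies y = y_{φ(x)}, i.e., the optimal coupling is deterministic. -/

import Mathlib

open MeasureTheory

/-- Determinism of optimal semi-discrete couplings: if a coupling `γ` of `μ` and
`ν = Σ_i b_i δ_{y_i}` (all `b_i > 0`) achieves the dual bound attained by the Laguerre
map (with `μ`-a.e. unique minimizers `φ`), then `γ`-almost every pair `(x, y)` satisfies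
`y = y_{φ(x)}`, i.e. the optimal coupling is deterministic. -/
theorem optimal_coupling_deterministic {d : ℕ} {I : Type*} [Fintype I] [Nonempty I]
    [MeasurableSpace I] [MeasurableSingletonClass I]
    (y : I → EuclideanSpace ℝ (Fin d)) (hy : Function.Injective y) (g : I → ℝ)
    (μ : Measure (EuclideanSpace ℝ (Fin d))) [IsProbabilityMeasure μ]
    (hμ : μ ≪ volume)
    (b : I → ℝ) (hb : ∀ i, 0 < b i) (hb1 : ∑ i : I, b i = 1)
    (hmass : ∀ i : I,
      μ {x | ∀ j : I, ‖x - y i‖ ^ 2 - g i ≤ ‖x - y j‖ ^ 2 - g j}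
        = ENNReal.ofReal (b i))
    (φ : EuclideanSpace ℝ (Fin d) → I) (hφmeas : Measurable φ)
    (hφ : ∀ᵐ x ∂μ,
      (∀ j : I, ‖x - y (φ x)‖ ^ 2 - g (φ x) ≤ ‖x - y j‖ ^ 2 - g j) ∧
      ∀ i : I, (∀ j : I, ‖x - y i‖ ^ 2 - g i ≤ ‖x - y j‖ ^ 2 - g j) → i = φ x)
    (γ : Measure (EuclideanSpace ℝ (Fin d) × EuclideanSpace ℝ (Fin d)))
    [IsProbabilityMeasure γ]
    (hγ₁ : Measure.map Prod.fst γ = μ)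
    (hγ₂ : Measure.map Prod.snd γ
      = ∑ i : I, ENNReal.ofReal (b i) • Measure.dirac (y i))
    (hint : Integrable (fun p : EuclideanSpace ℝ (Fin d) × EuclideanSpace ℝ (Fin d) =>
      ‖p.1 - p.2‖ ^ 2) γ)
    (hopt : ∫ p, ‖p.1 - p.2‖ ^ 2
          ∂(γ : Measure (EuclideanSpace ℝ (Fin d) × EuclideanSpace ℝ (Fin d)))
        = ∫ x, Finset.univ.inf' Finset.univ_nonempty
            (fun i : I => ‖x - y i‖ ^ 2 - g i) ∂μ + ∑ i : I, g i * b i) :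
    ∀ᵐ p ∂γ, p.2 = y (φ p.1) := by
  classical
  set f : EuclideanSpace ℝ (Fin d) → ℝ := fun x => Finset.univ.inf' Finset.univ_nonempty
      (fun i : I => ‖x - y i‖ ^ 2 - g i) with hfdef
  set G : EuclideanSpace ℝ (Fin d) → ℝ :=
      fun z => ∑ i : I, Set.indicator {y i} (fun _ => g i) z with hGdef
  have hGy : ∀ i, G (y i) = g i := by
    intro i
    rw [hGdef]
    simp only
    rw [Finset.sum_eq_single i]
    · simp
    · intro j _ hj
      apply Set.indicator_of_notMem
      simp only [Set.mem_singleton_iff]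
      exact fun h => hj (hy h.symm)
    · simp
  have hfcont : Continuous f := by
    apply Continuous.finset_inf'_apply Finset.univ_nonempty
    intro i _
    exact ((continuous_id.sub continuous_const).norm.pow 2).sub continuous_const
  have hGmeas : Measurable G := by
    apply Finset.measurable_sum
    intro i _
    exact Measurable.indicator measurable_const (measurableSet_singleton (y i))
  -- a.e. second coordinate in range
  have hrange : ∀ᵐ p ∂γ, ∃ i, p.2 = y i := by
    have h2 : ∀ᵐ z ∂(Measure.map Prod.snd γ), ∃ i, z = y i := by
      rw [hγ₂, ae_iff]
      have hms : MeasurableSet {z : EuclideanSpace ℝ (Fin d) | ¬∃ i, z = y i} := by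
        have h0 : {z : EuclideanSpace ℝ (Fin d) | ¬∃ i, z = y i}
            = (⋃ i, {y i})ᶜ := by
          ext z; simp [eq_comm]
        rw [h0]
        exact (MeasurableSet.iUnion fun i => measurableSet_singleton _).compl
      rw [Measure.finset_sum_apply]
      apply Finset.sum_eq_zero
      intro i _
      rw [Measure.smul_apply, Measure.dirac_apply' _ hms]
      rw [Set.indicator_of_notMem (not_not_intro ⟨i, rfl⟩)]
      simp
    exact ae_of_ae_map measurable_snd.aemeasurable h2
  have hφγ : ∀ᵐ p ∂γ,
      (∀ j : I, ‖p.1 - y (φ p.1)‖ ^ 2 - g (φ p.1) ≤ ‖p.1 - y j‖ ^ 2 - g j) ∧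
      ∀ i : I, (∀ j : I, ‖p.1 - y i‖ ^ 2 - g i ≤ ‖p.1 - y j‖ ^ 2 - g j) → i = φ p.1 := by
    rw [← hγ₁] at hφ
    exact ae_of_ae_map measurable_fst.aemeasurable hφ
  -- integrability pieces
  set M : ℝ := ∑ i : I, |g i| with hMdef
  have hgM : ∀ i, |g i| ≤ M :=
    fun i => Finset.single_le_sum (f := fun j => |g j|)
      (fun j _ => abs_nonneg (g j)) (Finset.mem_univ i)
  have hGbd : ∀ z, |G z| ≤ M := by
    intro z
    calc |G z| ≤ ∑ i : I, |Set.indicator {y i} (fun _ => g i) z| :=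
          Finset.abs_sum_le_sum_abs _ _
      _ ≤ ∑ i : I, |g i| := by
          apply Finset.sum_le_sum
          intro i _
          rw [Set.indicator]
          split <;> simp [abs_nonneg]
  have hGint : Integrable (fun p : EuclideanSpace ℝ (Fin d) × EuclideanSpace ℝ (Fin d)
      => G p.2) γ := by
    apply Integrable.mono' (integrable_const M)
      ((hGmeas.comp measurable_snd).aestronglyMeasurable)
    filter_upwards with p
    exact (Real.norm_eq_abs _) ▸ hGbd p.2
  obtain ⟨i₀⟩ := ‹Nonempty I›
  set C : ℝ := ∑ i : I, ‖y i - y i₀‖ with hCdef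
  have hC : ∀ i, ‖y i - y i₀‖ ≤ C :=
    fun i => Finset.single_le_sum (f := fun j => ‖y j - y i₀‖)
      (fun j _ => norm_nonneg _) (Finset.mem_univ i)
  have hC0 : 0 ≤ C := Finset.sum_nonneg fun j _ => norm_nonneg _
  have hyint : Integrable (fun p : EuclideanSpace ℝ (Fin d) × EuclideanSpace ℝ (Fin d)
      => ‖p.1 - y i₀‖ ^ 2) γ := by
    apply Integrable.mono' ((hint.const_mul 2).add (integrable_const (2 * C ^ 2)))
    · exact (((continuous_fst.sub continuous_const).norm.pow 2).aestronglyMeasurable)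
    · filter_upwards [hrange] with p hp
      obtain ⟨i, hi⟩ := hp
      rw [Real.norm_eq_abs, abs_of_nonneg (by positivity)]
      have h1 : ‖p.1 - y i₀‖ ≤ ‖p.1 - p.2‖ + C := by
        calc ‖p.1 - y i₀‖ ≤ ‖p.1 - p.2‖ + ‖p.2 - y i₀‖ :=
              norm_sub_le_norm_sub_add_norm_sub _ _ _
          _ ≤ ‖p.1 - p.2‖ + C := by rw [hi]; exact add_le_add_right (hC i) _
      calc ‖p.1 - y i₀‖ ^ 2 ≤ (‖p.1 - p.2‖ + C) ^ 2 :=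
            pow_le_pow_left₀ (norm_nonneg _) h1 2
        _ ≤ 2 * ‖p.1 - p.2‖ ^ 2 + 2 * C ^ 2 := by
            nlinarith [sq_nonneg (‖p.1 - p.2‖ - C)]
  have hfbd : ∀ x, |f x| ≤ ‖x - y i₀‖ ^ 2 + M := by
    intro x
    rw [abs_le]
    constructor
    · obtain ⟨i, _, hi⟩ := Finset.exists_mem_eq_inf' (Finset.univ_nonempty (α := I))
        (fun i : I => ‖x - y i‖ ^ 2 - g i)
      rw [hfdef]
      simp only
      rw [hi]
      nlinarith [sq_nonneg ‖x - y i‖, sq_nonneg ‖x - y i₀‖, hgM i, le_abs_self (g i)]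
    · have h1 : f x ≤ ‖x - y i₀‖ ^ 2 - g i₀ :=
        Finset.inf'_le _ (Finset.mem_univ i₀)
      have h2 := hgM i₀
      have h3 := neg_abs_le (g i₀)
      linarith
  have hfint : Integrable (fun p : EuclideanSpace ℝ (Fin d) × EuclideanSpace ℝ (Fin d)
      => f p.1) γ := by
    apply Integrable.mono' (hyint.add (integrable_const M))
    · exact (hfcont.comp continuous_fst).aestronglyMeasurable
    · filter_upwards with p
      exact (Real.norm_eq_abs _) ▸ hfbd p.1
  -- integral identities
  have hfμ : ∫ p, f p.1 ∂γ = ∫ x, f x ∂μ := by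
    rw [← hγ₁, integral_map measurable_fst.aemeasurable hfcont.aestronglyMeasurable]
  have hGν : ∫ p, G p.2 ∂γ = ∑ i : I, g i * b i := by
    have h1 : ∫ p, G p.2 ∂γ = ∫ z, G z ∂(Measure.map Prod.snd γ) :=
      (integral_map measurable_snd.aemeasurable hGmeas.aestronglyMeasurable).symm
    rw [h1, hγ₂, integral_finset_sum_measure ?hInt]
    case hInt =>
      intro i _
      apply Integrable.smul_measure _ ENNReal.ofReal_ne_top
      apply Integrable.mono' (integrable_const M) hGmeas.aestronglyMeasurable
      filter_upwards with z
      exact (Real.norm_eq_abs _) ▸ hGbd z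
    apply Finset.sum_congr rfl
    intro i _
    rw [integral_smul_measure, integral_dirac, hGy i,
      ENNReal.toReal_ofReal (hb i).le, smul_eq_mul, mul_comm]
  -- the excess function
  set h : EuclideanSpace ℝ (Fin d) × EuclideanSpace ℝ (Fin d) → ℝ :=
    fun p => ‖p.1 - p.2‖ ^ 2 - f p.1 - G p.2 with hhdef
  have hhint : Integrable h γ := (hint.sub hfint).sub hGint
  have hh0 : 0 ≤ᵐ[γ] h := by
    filter_upwards [hrange] with p hp
    obtain ⟨i, hi⟩ := hp
    have h1 : f p.1 ≤ ‖p.1 - y i‖ ^ 2 - g i := Finset.inf'_le _ (Finset.mem_univ i)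
    simp only [hhdef, Pi.zero_apply]
    rw [hi, hGy i]
    linarith
  have hhzero : ∫ p, h p ∂γ = 0 := by
    have hcf : Integrable (fun p : EuclideanSpace ℝ (Fin d) × EuclideanSpace ℝ (Fin d)
        => ‖p.1 - p.2‖ ^ 2 - f p.1) γ := hint.sub hfint
    rw [hhdef]
    simp only
    rw [integral_sub hcf hGint, integral_sub hint hfint, hfμ, hGν, hopt]
    ring
  have hhae : h =ᵐ[γ] 0 :=
    (integral_eq_zero_iff_of_nonneg_ae hh0 hhint).mp hhzero
  filter_upwards [hrange, hφγ, hhae] with p hp hφp hhp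
  obtain ⟨i, hi⟩ := hp
  have hz : ‖p.1 - y i‖ ^ 2 - g i = f p.1 := by
    have : h p = 0 := hhp
    rw [hhdef] at this
    simp only at this
    rw [hi, hGy i] at this
    linarith
  have hmin : ∀ j : I, ‖p.1 - y i‖ ^ 2 - g i ≤ ‖p.1 - y j‖ ^ 2 - g j := by
    intro j
    rw [hz]
    exact Finset.inf'_le _ (Finset.mem_univ j)
  rw [hi, hφp.2 i hmin]
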